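/- Let C be a small category equipped with a Grothendieck topology J, let F : Cᵒᵖ ⥤ Type be a J-sheaf, and let K be the slice topology J_{/F} on CostructuredArrow yoneda F. Then, under Mathlib's canonical equivalence Over F ≌ ((CostructuredArrow yoneda F)ᵒᵖ ⥤ Type) (overEquivPresheafCostructuredArrow), an object η : E ⟶ F of Over F has J-sheaf domain E if and only if the corresponding presheaf on CostructuredArrow yoneda F is a K-sheaf; consequently the equivalence restricts to an equivalence between the slice of J-sheaves over F and the category of K-sheaves on CostructuredArrow yoneda F. -/

import Mathlib

/-!
A section over `U = (X, s : yoneda X ⟶ F)` of the presheaf corresponding to `η : E ⟶ F` is an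
element of `E(X)` lying over `s`, and a morphism `V ⟶ U` is determined by its underlying
morphism `V.left ⟶ X`. Hence a compatible family on the `K`-cover induced by a `J`-cover `S` of
`X` is the same as a compatible family of `E` on `S` lying over the restrictions of `s`. If `E` is
a `J`-sheaf, such a family glues in `E`, and the gluing lies over `s` because `F` is
`J`-separated. Conversely, a compatible family of `E` on `S` is mapped by `η` to a family of `F`,
which glues to some `s` because `F` is a `J`-sheaf; the family then lies over `s` and glues on
the cover of `(X, s)`. The equivalence of categories is the restriction of
`overEquivPresheafCostructuredArrow F` to these corresponding full subcategories.
-/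

open CategoryTheory

universe v u

namespace CategoryTheory.Presieve.FamilyOfElements

open OverPresheafAux

variable {C : Type u} [Category.{v} C] {F E : Cᵒᵖ ⥤ Type v} {η : E ⟶ F}

section ForgetOver

variable {U : CostructuredArrow yoneda F} {S : Sieve U.left}
  {x : FamilyOfElements (restrictedYonedaObj η)
    (S.functorPullback (CostructuredArrow.proj yoneda F)).arrows}

def forgetOver (x : FamilyOfElements (restrictedYonedaObj η)
    (S.functorPullback (CostructuredArrow.proj yoneda F)).arrows) :
    FamilyOfElements E S.arrows :=
  fun _ f hf => (x (CostructuredArrow.mkPrecomp U.hom f) hf).val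

lemma forgetOver_left (hx : x.Compatible) {V : CostructuredArrow yoneda F} (φ : V ⟶ U)
    (hφ : S φ.left) : x.forgetOver φ.left hφ = (x φ hφ).val := by
  let ι : CostructuredArrow.mk (yoneda.map φ.left ≫ U.hom) ⟶ V :=
    CostructuredArrow.homMk (𝟙 V.left) (by simp)
  let φ' := CostructuredArrow.mkPrecomp U.hom φ.left
  have h : E.map (𝟙 V.left).op (x φ hφ).val = E.map (𝟙 V.left).op (x φ' hφ).val :=
    congrArg OverArrows.val
      (hx ι (𝟙 _) (f₂ := φ') hφ hφ (CostructuredArrow.hom_ext _ _ (by simp [ι, φ'])))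
  simpa [forgetOver] using h.symm

lemma Compatible.forgetOver (hx : x.Compatible) : x.forgetOver.Compatible := by
  rw [compatible_iff_sieveCompatible]
  intro _ _ g f hg
  let ψ := CostructuredArrow.mkPrecomp (yoneda.map g ≫ U.hom) f
  have hψ := hx.to_sieveCompatible (CostructuredArrow.mkPrecomp U.hom g) ψ hg
  exact (forgetOver_left hx (ψ ≫ CostructuredArrow.mkPrecomp U.hom g) _).trans
    (congrArg OverArrows.val hψ)

lemma isAmalgamation_iff_forgetOver (hx : x.Compatible) (u : OverArrows η U.hom) :
    x.IsAmalgamation u ↔ x.forgetOver.IsAmalgamation u.val := by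
  constructor
  · intro hu Z f hf
    exact congrArg OverArrows.val (hu (CostructuredArrow.mkPrecomp U.hom f) hf)
  · intro hu V φ hφ
    exact OverArrows.ext ((hu φ.left hφ).trans (forgetOver_left hx φ hφ))

variable (x) in
lemma isAmalgamation_map_forgetOver :
    (x.forgetOver.map η).IsAmalgamation (yonedaEquiv U.hom) := fun _ f hf =>
  (yonedaEquiv_naturality U.hom f).trans
    (x (CostructuredArrow.mkPrecomp U.hom f) hf).app_val.symm

end ForgetOver

section LiftOver

variable {U : CostructuredArrow yoneda F} {S : Sieve U.left} {y : FamilyOfElements E S.arrows}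

def liftOver (y : FamilyOfElements E S.arrows)
    (hyU : (y.map η).IsAmalgamation (yonedaEquiv U.hom)) :
    FamilyOfElements (restrictedYonedaObj η)
      (S.functorPullback (CostructuredArrow.proj yoneda F)).arrows :=
  fun V φ hφ => ⟨y φ.left hφ, ⟨(hyU φ.left hφ).symm.trans <| by
    rw [yonedaEquiv_naturality, CostructuredArrow.w φ]⟩⟩

lemma Compatible.liftOver (hy : y.Compatible)
    (hyU : (y.map η).IsAmalgamation (yonedaEquiv U.hom)) : (y.liftOver hyU).Compatible :=
  fun _ _ _ g₁ g₂ _ _ h₁ h₂ comm =>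
    OverArrows.ext (hy g₁.left g₂.left h₁ h₂ (congrArg CommaMorphism.left comm))

end LiftOver

end CategoryTheory.Presieve.FamilyOfElements

namespace CategoryTheory.OverPresheafAux

open Opposite Presieve

variable {C : Type u} [Category.{v} C] {F E : Cᵒᵖ ⥤ Type v} (η : E ⟶ F)

lemma isSheafFor_restrictedYonedaObj {U : CostructuredArrow yoneda F} {S : Sieve U.left}
    (hF : IsSeparatedFor F S.arrows) (hE : IsSheafFor E S.arrows) :
    IsSheafFor (restrictedYonedaObj η)
      (S.functorPullback (CostructuredArrow.proj yoneda F)).arrows := by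
  intro x hx
  obtain ⟨e, he, he_unique⟩ := hE _ hx.forgetOver
  have hηe : MakesOverArrow η U.hom e :=
    ⟨hF _ _ _ (he.map η) x.isAmalgamation_map_forgetOver⟩
  refine ⟨⟨e, hηe⟩, (x.isAmalgamation_iff_forgetOver hx _).2 he, fun u hu => ?_⟩
  exact OverArrows.ext (he_unique _ ((x.isAmalgamation_iff_forgetOver hx u).1 hu))

lemma isSheafFor_of_isSheafFor_restrictedYonedaObj {X : C} {S : Sieve X}
    (hF : IsSheafFor F S.arrows)
    (h : ∀ t : F.obj (op X), IsSheafFor (restrictedYonedaObj η)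
      (Sieve.functorPullback (X := CostructuredArrow.mk (yonedaEquiv.symm t))
        (CostructuredArrow.proj yoneda F) S).arrows) :
    IsSheafFor E S.arrows := by
  intro y hy
  obtain ⟨t, ht, ht_unique⟩ := hF _ (hy.map η)
  let U := CostructuredArrow.mk (yonedaEquiv.symm t)
  have htU : (y.map η).IsAmalgamation (yonedaEquiv U.hom) := by simpa [U] using ht
  let x := y.liftOver (U := U) htU
  have hx : x.Compatible := hy.liftOver htU
  have hamalg (u : OverArrows η U.hom) : x.IsAmalgamation u ↔ y.IsAmalgamation u.val :=
    x.isAmalgamation_iff_forgetOver hx u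
  obtain ⟨u, hu, hu_unique⟩ := h t x hx
  refine ⟨u.val, (hamalg u).1 hu, fun e he => ?_⟩
  have hηe : MakesOverArrow η U.hom e := ⟨(ht_unique _ (he.map η)).trans (by simp [U])⟩
  exact congrArg OverArrows.val (hu_unique ⟨e, hηe⟩ ((hamalg _).2 he))

variable {J : GrothendieckTopology C} {K : GrothendieckTopology (CostructuredArrow yoneda F)}

lemma isSheaf_restrictedYonedaObj (hF : IsSheaf J F)
    (hK : ∀ (U : CostructuredArrow yoneda F) (T : Sieve U), T ∈ K U →
      ∃ S ∈ J U.left, T = S.functorPullback (CostructuredArrow.proj yoneda F))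
    (hE : IsSheaf J E) : IsSheaf K (restrictedYonedaObj η) := by
  intro U T hT
  obtain ⟨S, hS, rfl⟩ := hK U T hT
  exact isSheafFor_restrictedYonedaObj η (hF S hS).isSeparatedFor (hE S hS)

lemma isSheaf_of_isSheaf_restrictedYonedaObj (hF : IsSheaf J F)
    (hK : ∀ (U : CostructuredArrow yoneda F), ∀ S ∈ J U.left,
      S.functorPullback (CostructuredArrow.proj yoneda F) ∈ K U)
    (h : IsSheaf K (restrictedYonedaObj η)) : IsSheaf J E := fun _ S hS =>
  isSheafFor_of_isSheafFor_restrictedYonedaObj η (hF S hS) fun _ => h _ (hK (.mk _) S hS)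

end CategoryTheory.OverPresheafAux

instance CategoryTheory.Presheaf.isClosedUnderIsomorphisms_isSheaf {C : Type u} [Category.{v} C]
    {A : Type*} [Category A] (J : GrothendieckTopology C) :
    ObjectProperty.IsClosedUnderIsomorphisms (Presheaf.IsSheaf J (A := A)) :=
  ⟨fun e => (Presheaf.isSheaf_of_iso_iff e).1⟩

theorem statement4 {C : Type u} [SmallCategory C] (J : GrothendieckTopology C)
    (F : Cᵒᵖ ⥤ Type u) (hF : Presieve.IsSheaf J F)
    (K : GrothendieckTopology (CostructuredArrow yoneda F))
    (hK : ∀ (U : CostructuredArrow yoneda F) (T : Sieve U),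
      T ∈ K U ↔
        ∃ S ∈ J ((CostructuredArrow.proj yoneda F).obj U),
          T = S.functorPullback (CostructuredArrow.proj yoneda F)) :
    (∀ η : Over F, Presieve.IsSheaf J η.left ↔
        Presieve.IsSheaf K ((overEquivPresheafCostructuredArrow F).functor.obj η)) ∧
      Nonempty ((ObjectProperty.FullSubcategory fun η : Over F => Presieve.IsSheaf J η.left) ≌
        Sheaf K (Type u)) := by
  have key (η : Over F) : Presieve.IsSheaf J η.left ↔
      Presieve.IsSheaf K ((overEquivPresheafCostructuredArrow F).functor.obj η) :=
    ⟨OverPresheafAux.isSheaf_restrictedYonedaObj η.hom hF fun U T => (hK U T).1,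
      OverPresheafAux.isSheaf_of_isSheaf_restrictedYonedaObj η.hom hF
        fun U S hS => (hK U _).2 ⟨S, hS, rfl⟩⟩
  refine ⟨key, ⟨(overEquivPresheafCostructuredArrow F).congrFullSubcategory ?_⟩⟩
  ext η
  exact (isSheaf_iff_isSheaf_of_type K _).trans (key η).symm
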